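/- arXiv:2005.11690 — 4 statements merged into one kernel-verified Lean document; each statement's English description precedes it below -/
import Mathlib

section
/- The multiplication map V_1 ⊗ V_2 → H^0(O_R(1)) is an isomorphism, where R ∈ |O_{P^1×P^2}(2,1)| is smooth irreducible, V_1 = p_1|_R^* H^0(O_{P^1}(1)) and V_2 = p_2|_R^* H^0(O_{P^2}(1)). Consequently the restriction map H^0(O_{P^1×P^2}(1,1)) → H^0(O_R(1,1)) is an isomorphism. -/
/-!
Formalization: sections of O_{ℙ¹×ℙ²}(a,b) are bihomogeneous forms of bidegree
(a,b); since R is projectively normal in the Segre embedding and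
h⁰(O_R(1,1)) = 6, the space H⁰(O_R(1,1)) of sections of O_R(1) is the
bidegree-(1,1) part of the homogeneous coordinate ring A/(P) of R, i.e. the
image of the bidegree-(1,1) forms in A/(P).  The pullbacks V₁, V₂ are the
images in A/(P) of the forms of bidegree (1,0) resp. (0,1); since P has
bidegree (2,1), restriction is injective in these degrees and we may compute
with the forms themselves.

Proof: a monomial in the variables of ℙᵐ × ℙⁿ of bidegree (a,b) splits uniquely as
a monomial of bidegree (a,0) times one of bidegree (0,b), so multiplication carries
the monomial basis of the tensor product of the (a,0)- and (0,b)-forms bijectively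
onto the monomial basis of the (a,b)-forms. Restriction to R is injective on
(1,1)-forms because every nonzero multiple of P has first degree at least 2.
-/

open MvPolynomial LinearAlgebra.Projectivization TensorProduct

abbrev VarP1P2 := Fin 2 ⊕ Fin 3

def bidegWt : VarP1P2 → ℕ × ℕ := Sum.elim (fun _ => (1, 0)) (fun _ => (0, 1))

def IsSmoothBihom (P : MvPolynomial VarP1P2 ℂ) : Prop :=
  ∀ (z : Fin 2 → ℂ) (x : Fin 3 → ℂ), z ≠ 0 → x ≠ 0 →
    eval (Sum.elim z x) P = 0 → ∃ i, eval (Sum.elim z x) (pderiv i P) ≠ 0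

/-- The space of bihomogeneous forms of bidegree `(a,b)`,
`H⁰(O_{ℙ¹×ℙ²}(a,b))`. -/
noncomputable abbrev bihomForms (a b : ℕ) : Submodule ℂ (MvPolynomial VarP1P2 ℂ) :=
  weightedHomogeneousSubmodule ℂ bidegWt (a, b)

/-- Restriction to `R = {P = 0}`: the quotient map to the homogeneous
coordinate ring `A/(P)` of `R`, as a `ℂ`-linear map. -/
noncomputable def restr (P : MvPolynomial VarP1P2 ℂ) :
    MvPolynomial VarP1P2 ℂ →ₗ[ℂ] (MvPolynomial VarP1P2 ℂ ⧸ Ideal.span {P}) :=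
  (Ideal.Quotient.mkₐ ℂ (Ideal.span {P})).toLinearMap

/-- `H⁰(O_R(1)) = H⁰(O_R(1,1))`: the bidegree-(1,1) part of the homogeneous
coordinate ring of `R`. -/
noncomputable def sectionsOR1 (P : MvPolynomial VarP1P2 ℂ) :
    Submodule ℂ (MvPolynomial VarP1P2 ℂ ⧸ Ideal.span {P}) :=
  Submodule.map (restr P) (bihomForms 1 1)

/-- The multiplication map `V₁ ⊗ V₂ → A/(P)`,
`f ⊗ g ↦ (f·g)|_R`. -/
noncomputable def mulRestr (P : MvPolynomial VarP1P2 ℂ) :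
    (bihomForms 1 0 ⊗[ℂ] bihomForms 0 1) →ₗ[ℂ]
      (MvPolynomial VarP1P2 ℂ ⧸ Ideal.span {P}) :=
  TensorProduct.lift
    (LinearMap.mk₂ ℂ (fun f g => restr P (f.1 * g.1))
      (fun f f' g => by simp [add_mul])
      (fun c f g => by simp [smul_mul_assoc])
      (fun f g g' => by simp [mul_add])
      (fun c f g => by simp [mul_smul_comm]))

namespace MvPolynomial

section Weighted

variable {R σ M : Type*} [CommSemiring R] [AddCommMonoid M]

theorem IsWeightedHomogeneous.eq_zero_of_dvd {w : σ → M} {m n : M} {P f : MvPolynomial σ R}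
    (hP : P.IsWeightedHomogeneous w m) (hf : f.IsWeightedHomogeneous w n) (hPf : P ∣ f)
    (hmn : ∀ k, m + k ≠ n) : f = 0 := by
  classical
  by_contra hne
  obtain ⟨d, hd⟩ := ne_zero_iff.mp hne
  obtain ⟨Q, rfl⟩ := hPf
  obtain ⟨⟨d₁, d₂⟩, hmem, hne'⟩ := Finset.exists_ne_zero_of_sum_ne_zero (coeff_mul P Q d ▸ hd)
  rw [Finset.HasAntidiagonal.mem_antidiagonal] at hmem
  apply hmn (Finsupp.weight w d₂)
  rw [← hP (left_ne_zero_of_mul hne'), ← map_add, hmem]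
  exact hf hd

theorem coe_basisRestrictSupport (s : Set (σ →₀ ℕ)) (d : s) :
    (basisRestrictSupport R s d : MvPolynomial σ R) = monomial (d : σ →₀ ℕ) 1 := by
  classical
  have hd : monomial (d : σ →₀ ℕ) (1 : R) ∈ restrictSupport R s := by
    rw [restrictSupport_eq_span]
    exact Submodule.subset_span ⟨d, d.2, rfl⟩
  have key : basisRestrictSupport R s d = ⟨monomial (d : σ →₀ ℕ) 1, hd⟩ := by
    rw [Module.Basis.apply_eq_iff]
    ext i
    simp only [basisRestrictSupport, AddMonoidAlgebra.supportedEquivFinsupp]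
    erw [LinearEquiv.trans_apply]
    change coeff (i : σ →₀ ℕ) (monomial (d : σ →₀ ℕ) (1 : R)) = Finsupp.single d 1 i
    simp [coeff_monomial, Finsupp.single_apply, Subtype.ext_iff]
  exact congrArg Subtype.val key

variable (R) in
noncomputable def weightedHomogeneousBasis (w : σ → M) (m : M) :
    Module.Basis {d : σ →₀ ℕ | Finsupp.weight w d = m} R (weightedHomogeneousSubmodule R w m) :=
  (basisRestrictSupport R _).map
    (LinearEquiv.ofEq _ _ (weightedHomogeneousSubmodule_eq_finsupp_supported R w m).symm)

theorem coe_weightedHomogeneousBasis (w : σ → M) (m : M)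
    (d : {d : σ →₀ ℕ | Finsupp.weight w d = m}) :
    (weightedHomogeneousBasis R w m d : MvPolynomial σ R) = monomial (d : σ →₀ ℕ) 1 :=
  coe_basisRestrictSupport _ d

end Weighted

section Bidegree

variable {R σ τ : Type*}

variable (σ τ) in
def bidegreeWeight : σ ⊕ τ → ℕ × ℕ := Sum.elim (fun _ => (1, 0)) (fun _ => (0, 1))

theorem fst_weight_bidegreeWeight_eq_zero_iff {d : σ ⊕ τ →₀ ℕ} :
    (Finsupp.weight (bidegreeWeight σ τ) d).1 = 0 ↔ ∀ i, d (.inl i) = 0 := by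
  simp [Finsupp.weight_apply, Finsupp.sum, Prod.fst_sum, bidegreeWeight]

theorem snd_weight_bidegreeWeight_eq_zero_iff {d : σ ⊕ τ →₀ ℕ} :
    (Finsupp.weight (bidegreeWeight σ τ) d).2 = 0 ↔ ∀ j, d (.inr j) = 0 := by
  simp [Finsupp.weight_apply, Finsupp.sum, Prod.snd_sum, bidegreeWeight]

theorem exists_add_of_weight_bidegreeWeight {d : σ ⊕ τ →₀ ℕ} {a b : ℕ}
    (hd : Finsupp.weight (bidegreeWeight σ τ) d = (a, b)) :
    ∃ d₁ d₂, Finsupp.weight (bidegreeWeight σ τ) d₁ = (a, 0) ∧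
      Finsupp.weight (bidegreeWeight σ τ) d₂ = (0, b) ∧ d₁ + d₂ = d := by
  set d₁ := d.filter (fun x => x.isLeft)
  set d₂ := d.filter (fun x => ¬ x.isLeft)
  have h₁ : (Finsupp.weight (bidegreeWeight σ τ) d₁).2 = 0 :=
    snd_weight_bidegreeWeight_eq_zero_iff.mpr fun j => by simp [d₁]
  have h₂ : (Finsupp.weight (bidegreeWeight σ τ) d₂).1 = 0 :=
    fst_weight_bidegreeWeight_eq_zero_iff.mpr fun i => by simp [d₂]
  have hsum : d₁ + d₂ = d := Finsupp.filter_add_filter_not d _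
  have hw := congrArg (Finsupp.weight (bidegreeWeight σ τ)) hsum
  rw [map_add, hd] at hw
  refine ⟨d₁, d₂, Prod.ext ?_ h₁, Prod.ext h₂ ?_, hsum⟩
  · simpa [h₂] using congrArg Prod.fst hw
  · simpa [h₁] using congrArg Prod.snd hw

theorem injective_add_of_weight_bidegreeWeight (a b : ℕ) :
    Function.Injective fun p : {d : σ ⊕ τ →₀ ℕ | Finsupp.weight (bidegreeWeight σ τ) d = (a, 0)} ×
        {d : σ ⊕ τ →₀ ℕ | Finsupp.weight (bidegreeWeight σ τ) d = (0, b)} =>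
      (p.1 : σ ⊕ τ →₀ ℕ) + p.2 := by
  rintro ⟨⟨d₁, h₁⟩, ⟨d₂, h₂⟩⟩ ⟨⟨d₁', h₁'⟩, ⟨d₂', h₂'⟩⟩ h
  have hr₁ := snd_weight_bidegreeWeight_eq_zero_iff.mp (congrArg Prod.snd h₁)
  have hr₁' := snd_weight_bidegreeWeight_eq_zero_iff.mp (congrArg Prod.snd h₁')
  have hl₂ := fst_weight_bidegreeWeight_eq_zero_iff.mp (congrArg Prod.fst h₂)
  have hl₂' := fst_weight_bidegreeWeight_eq_zero_iff.mp (congrArg Prod.fst h₂')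
  have hl (i : σ) := DFunLike.congr_fun h (.inl i)
  have hr (j : τ) := DFunLike.congr_fun h (.inr j)
  simp only [Finsupp.add_apply, hr₁, hr₁', hl₂, hl₂', add_zero, zero_add] at hl hr
  ext (i | j) <;> simp [hl, hr, hr₁, hr₁', hl₂, hl₂']

theorem weightedHomogeneousSubmodule_bidegreeWeight_mul [CommSemiring R] (a b : ℕ) :
    weightedHomogeneousSubmodule R (bidegreeWeight σ τ) (a, 0) *
      weightedHomogeneousSubmodule R (bidegreeWeight σ τ) (0, b) =
      weightedHomogeneousSubmodule R (bidegreeWeight σ τ) (a, b) := by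
  refine le_antisymm (Submodule.mul_le.mpr fun f hf g hg => by simpa using hf.mul hg) ?_
  rw [weightedHomogeneousSubmodule_eq_finsupp_supported, ← restrictSupport,
    restrictSupport_eq_span, Submodule.span_le]
  rintro _ ⟨d, hd, rfl⟩
  obtain ⟨d₁, d₂, h₁, h₂, rfl⟩ := exists_add_of_weight_bidegreeWeight hd
  change monomial (d₁ + d₂) (1 : R) ∈ _
  rw [← mul_one (1 : R), ← monomial_mul]
  exact Submodule.mul_mem_mul (isWeightedHomogeneous_monomial _ _ _ h₁)
    (isWeightedHomogeneous_monomial _ _ _ h₂)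

theorem linearDisjoint_weightedHomogeneousSubmodule_bidegreeWeight [CommRing R] (a b : ℕ) :
    (weightedHomogeneousSubmodule R (bidegreeWeight σ τ) (a, 0)).LinearDisjoint
      (weightedHomogeneousSubmodule R (bidegreeWeight σ τ) (0, b)) := by
  refine .of_basis_mul _ _ (weightedHomogeneousBasis R (bidegreeWeight σ τ) (a, 0))
    (weightedHomogeneousBasis R (bidegreeWeight σ τ) (0, b)) ?_
  simp only [coe_weightedHomogeneousBasis, monomial_mul, mul_one]
  have hmon := (basisMonomials (σ ⊕ τ) R).linearIndependent
  rw [coe_basisMonomials] at hmon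
  exact hmon.comp _ (injective_add_of_weight_bidegreeWeight a b)

end Bidegree

end MvPolynomial

theorem injective_restr_comp_subtype {P : MvPolynomial VarP1P2 ℂ}
    (hP : P.IsWeightedHomogeneous bidegWt (2, 1)) :
    Function.Injective ((restr P).comp (bihomForms 1 1).subtype) := by
  refine (injective_iff_map_eq_zero _).mpr fun f hf => Subtype.ext ?_
  have hPf : P ∣ (f : MvPolynomial VarP1P2 ℂ) :=
    Ideal.mem_span_singleton.mp (Ideal.Quotient.eq_zero_iff_mem.mp hf)
  exact hP.eq_zero_of_dvd f.2 hPf fun k hk => by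
    have : 2 + k.1 = 1 := congrArg Prod.fst hk
    omega

theorem range_mulMap_bihomForms :
    LinearMap.range (Submodule.mulMap (bihomForms 1 0) (bihomForms 0 1)) = bihomForms 1 1 :=
  (Submodule.mulMap_range _ _).trans (weightedHomogeneousSubmodule_bidegreeWeight_mul 1 1)

theorem mulRestr_eq_restr_comp_mulMap (P : MvPolynomial VarP1P2 ℂ) :
    mulRestr P = restr P ∘ₗ Submodule.mulMap (bihomForms 1 0) (bihomForms 0 1) :=
  TensorProduct.ext' fun _ _ => rfl

theorem multiplication_map_isomorphism_general (P : MvPolynomial VarP1P2 ℂ)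
    (hbihom : P.IsWeightedHomogeneous bidegWt (2, 1)) :
    -- V₁ ⊗ V₂ → H⁰(O_R(1)) is an isomorphism:
    Function.Injective (mulRestr P) ∧
    LinearMap.range (mulRestr P) = sectionsOR1 P ∧
    -- consequently H⁰(O_{ℙ¹×ℙ²}(1,1)) → H⁰(O_R(1,1)) is an isomorphism:
    Function.Injective ((restr P).comp (bihomForms 1 1).subtype) := by
  have hrestr := injective_restr_comp_subtype hbihom
  refine ⟨?_, ?_, hrestr⟩
  · have hmem (x) : Submodule.mulMap (bihomForms 1 0) (bihomForms 0 1) x ∈ bihomForms 1 1 :=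
      range_mulMap_bihomForms ▸ LinearMap.mem_range_self _ x
    rw [mulRestr_eq_restr_comp_mulMap]
    exact hrestr.comp (f := fun x => ⟨_, hmem x⟩) fun x y hxy =>
      (linearDisjoint_weightedHomogeneousSubmodule_bidegreeWeight 1 1).injective
        (congrArg Subtype.val hxy)
  · rw [mulRestr_eq_restr_comp_mulMap, LinearMap.range_comp, range_mulMap_bihomForms]
    rfl

theorem multiplication_map_isomorphism (P : MvPolynomial VarP1P2 ℂ)
    (hbihom : P.IsWeightedHomogeneous bidegWt (2, 1)) (hirr : Irreducible P)
    (hsm : IsSmoothBihom P) :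
    -- V₁ ⊗ V₂ → H⁰(O_R(1)) is an isomorphism:
    Function.Injective (mulRestr P) ∧
    LinearMap.range (mulRestr P) = sectionsOR1 P ∧
    -- consequently H⁰(O_{ℙ¹×ℙ²}(1,1)) → H⁰(O_R(1,1)) is an isomorphism:
    Function.Injective ((restr P).comp (bihomForms 1 1).subtype) :=
  multiplication_map_isomorphism_general P hbihom
end

section
/- Let R = P^1 × B ⊂ P^1 × P^2 with B a smooth conic, a smooth quartic scroll in P^5 under the Segre embedding. Then the image of H^0(I_R(3)) under the restriction map H^0(O_{P^5}(3)) → H^0(O_{P^1×P^2}(3,3)) equals F · H^0(O_{P^1×P^2}(3,1)), where F ∈ H^0(O_{P^1×P^2}(0,2)) is the defining equation of R. -/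
/-!
STATEMENT 8: Let R = ℙ¹ × B ⊂ ℙ¹ × ℙ² with B a smooth conic, a smooth quartic
scroll in ℙ⁵ under the Segre embedding.  Then the image of H⁰(I_R(3)) under
the restriction map π : H⁰(O_{ℙ⁵}(3)) → H⁰(O_{ℙ¹×ℙ²}(3,3)) equals
F · H⁰(O_{ℙ¹×ℙ²}(3,1)), where F ∈ H⁰(O_{ℙ¹×ℙ²}(0,2)) is the defining
equation of R.

Formalization: coordinates of ℙ⁵ are indexed by Fin 2 × Fin 3; the Segre
restriction π is the substitution w_{ij} ↦ Z_i·X_j.  H⁰(I_R(3)) is the space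
of homogeneous cubics G on ℙ⁵ vanishing on R, i.e. such that π G vanishes
at every point of the affine cone of R.  F is the pullback of a smooth conic
Q ⊂ ℙ².  The claim is the set equality
π(H⁰(I_R(3))) = F · {bihomogeneous forms of bidegree (3,1)}.
-/

open MvPolynomial

/-- Coordinates of ℙ⁵, indexed by pairs `(i,j)` via the Segre embedding. -/
abbrev VarP5 := Fin 2 × Fin 3

/-- The restriction map `π : H⁰(O_{ℙ⁵}(d)) → H⁰(O_{ℙ¹×ℙ²}(d,d))` of the Segre
embedding: substitute `w_{ij} ↦ Z_i · X_j`. -/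
noncomputable def segreRestriction :
    MvPolynomial VarP5 ℂ →ₐ[ℂ] MvPolynomial VarP1P2 ℂ :=
  aeval (fun p => X (Sum.inl p.1) * X (Sum.inr p.2))

/-!
The restriction of a cubic vanishing on `R` vanishes on the zero locus of `F`. Since the conic
is smooth, the singular points of `F` lie in the plane `X₀ = X₁ = 0`, which contains no
hypersurface, so `F` is squarefree and the Nullstellensatz makes it divide the restriction.
The quotient has bidegree `(3,3) - (0,2) = (3,1)`. Conversely, every form of bidegree `(n,n)`
is the restriction of a form of degree `n`: a monomial `Z^a X^b` with `|a| = |b| = n` is the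
image of `∏ w_{ij}^{A i j}` for any matrix `A` with row sums `a` and column sums `b`.
-/

theorem Fintype.exists_eq_add_single_of_sum_eq_succ {α : Type*} [Fintype α] [DecidableEq α]
    {f : α → ℕ} {n : ℕ} (hf : ∑ a, f a = n + 1) :
    ∃ (a : α) (g : α → ℕ), f = g + Pi.single a 1 ∧ ∑ a, g a = n := by
  obtain ⟨a, ha⟩ : ∃ a, f a ≠ 0 := by
    by_contra! h0
    simp [h0] at hf
  have hfg : f = (f - Pi.single a 1) + Pi.single a 1 := by
    ext x
    rcases eq_or_ne x a with rfl | hx <;> simp [*]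
    omega
  refine ⟨a, f - Pi.single a 1, hfg, ?_⟩
  rw [hfg] at hf
  simpa [Finset.sum_add_distrib] using hf

theorem exists_matrix_of_sum_rows_of_sum_cols {ι κ : Type*} [Fintype ι] [Fintype κ]
    (n : ℕ) (r : ι → ℕ) (c : κ → ℕ) (hr : ∑ i, r i = n) (hc : ∑ j, c j = n) :
    ∃ A : ι → κ → ℕ, (∀ i, ∑ j, A i j = r i) ∧ ∀ j, ∑ i, A i j = c j := by
  classical
  induction n generalizing r c with
  | zero =>
    refine ⟨0, fun i => ?_, fun j => ?_⟩
    · simpa using (Finset.sum_eq_zero_iff.mp hr i (Finset.mem_univ i)).symm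
    · simpa using (Finset.sum_eq_zero_iff.mp hc j (Finset.mem_univ j)).symm
  | succ n ih =>
    obtain ⟨i₀, r', rfl, hr'⟩ := Fintype.exists_eq_add_single_of_sum_eq_succ hr
    obtain ⟨j₀, c', rfl, hc'⟩ := Fintype.exists_eq_add_single_of_sum_eq_succ hc
    obtain ⟨A, hA₁, hA₂⟩ := ih r' c' hr' hc'
    refine ⟨fun i j => A i j + if i = i₀ ∧ j = j₀ then 1 else 0, fun i => ?_, fun j => ?_⟩
    · simp [Finset.sum_add_distrib, hA₁, ite_and, Pi.single_apply]
    · simp [Finset.sum_add_distrib, hA₂, ite_and, Pi.single_apply]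

namespace MvPolynomial

section Nullstellensatz

variable {σ τ K : Type*} [Field K] [IsAlgClosed K]

theorem exists_dvd_pow_of_forall_eval_eq_zero [Finite σ] {f g : MvPolynomial σ K}
    (h : ∀ x, eval x f = 0 → eval x g = 0) : ∃ n, f ∣ g ^ n := by
  have hg : g ∈ (Ideal.span {f}).radical := by
    rw [← vanishingIdeal_zeroLocus_eq_radical (K := K)]
    intro x hx
    simpa using h x (by simpa using hx f (Ideal.subset_span rfl))
  obtain ⟨n, hn⟩ := hg
  exact ⟨n, Ideal.mem_span_singleton.mp hn⟩

theorem _root_.Squarefree.dvd_of_forall_eval_eq_zero [Finite σ] {f g : MvPolynomial σ K}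
    (hf : Squarefree f) (h : ∀ x, eval x f = 0 → eval x g = 0) : f ∣ g :=
  let ⟨n, hn⟩ := exists_dvd_pow_of_forall_eval_eq_zero h
  hf.isRadical n g hn

theorem isUnit_of_forall_eval_eq_zero [Finite σ] {g : MvPolynomial σ K} {a b : σ} (hab : a ≠ b)
    (h : ∀ x, eval x g = 0 → x a = 0 ∧ x b = 0) : IsUnit g := by
  obtain ⟨m, hm⟩ := exists_dvd_pow_of_forall_eval_eq_zero (g := X a) fun x hx => by
    simpa using (h x hx).1
  obtain ⟨n, hn⟩ := exists_dvd_pow_of_forall_eval_eq_zero (g := X b) fun x hx => by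
    simpa using (h x hx).2
  obtain ⟨_ | i, -, hi⟩ := (dvd_prime_pow X_prime m).mp hm
  · simpa using hi
  · have : (X a : MvPolynomial σ K) ∣ X b :=
      X_prime.dvd_of_dvd_pow ((dvd_pow_self _ i.succ_ne_zero).trans (hi.symm.dvd.trans hn))
    exact absurd (X_dvd_X.mp this) hab

theorem squarefree_of_forall_eval_pderiv_eq_zero [Finite σ] {f : MvPolynomial σ K} {a b : σ}
    (hab : a ≠ b)
    (h : ∀ x, eval x f = 0 → (∀ i, eval x (pderiv i f) = 0) → x a = 0 ∧ x b = 0) :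
    Squarefree f := by
  rintro g ⟨k, rfl⟩
  exact isUnit_of_forall_eval_eq_zero hab fun x hx =>
    h x (by simp [hx]) fun i => by simp [Derivation.leibniz, hx]

/-- For homogeneous `Q` this says that the projective hypersurface `Q = 0` is smooth. -/
def IsSmoothAwayFromZero (Q : MvPolynomial σ K) : Prop :=
  ∀ x : σ → K, x ≠ 0 → eval x Q = 0 → ∃ i, eval x (pderiv i Q) ≠ 0

theorem IsSmoothAwayFromZero.squarefree_rename [Finite τ] {Q : MvPolynomial σ K}
    (hQ : Q.IsSmoothAwayFromZero) {f : σ → τ} (hf : f.Injective) {a b : σ} (hab : a ≠ b) :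
    Squarefree (rename f Q) := by
  refine squarefree_of_forall_eval_pderiv_eq_zero (hf.ne hab) fun x hx hsing => ?_
  have hx0 : x ∘ f = 0 := by
    by_contra hne
    obtain ⟨i, hi⟩ := hQ _ hne (by simpa [eval_rename] using hx)
    exact hi (by simpa [pderiv_rename hf, eval_rename] using hsing (f i))
  exact ⟨congrFun hx0 a, congrFun hx0 b⟩

end Nullstellensatz

section WeightedHomogeneous

variable {σ τ R M : Type*} [CommSemiring R]

theorem IsHomogeneous.isWeightedHomogeneous_aeval [AddCommMonoid M] {w : τ → M}
    {G : MvPolynomial σ R} {n : ℕ} (hG : G.IsHomogeneous n)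
    {g : σ → MvPolynomial τ R} {m : M} (hg : ∀ i, (g i).IsWeightedHomogeneous w m) :
    (MvPolynomial.aeval g G).IsWeightedHomogeneous w (n • m) := by
  rw [← G.support_sum_monomial_coeff, map_sum]
  refine IsWeightedHomogeneous.sum _ _ _ fun e he => ?_
  have hdeg : e.degree = n := by
    rw [Finsupp.degree_eq_weight_one]
    exact hG (mem_support_iff.mp he)
  rw [aeval_monomial, ← hdeg, Finsupp.degree_apply, Finset.sum_smul,
    ← zero_add (Finset.sum _ _)]
  exact (isWeightedHomogeneous_C w _).mul
    (IsWeightedHomogeneous.prod _ _ _ fun i _ => (hg i).pow (e i))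

variable [AddCancelCommMonoid M] {w : σ → M}

theorem IsWeightedHomogeneous.weightedHomogeneousComponent_mul_left {F : MvPolynomial σ R}
    {m : M} (hF : F.IsWeightedHomogeneous w m) (k : M) (h : MvPolynomial σ R) :
    weightedHomogeneousComponent w (m + k) (F * h) = F * weightedHomogeneousComponent w k h := by
  classical
  induction h using MvPolynomial.induction_on' with
  | monomial d r =>
    have hd := isWeightedHomogeneous_monomial w d r rfl
    rw [weightedHomogeneousComponent_of_mem (hF.mul hd), weightedHomogeneousComponent_of_mem hd]
    simp only [add_right_inj]
    split_ifs <;> simp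
  | add p q hp hq => simp only [mul_add, map_add, hp, hq]

theorem IsWeightedHomogeneous.of_mul_left [NoZeroDivisors R] {F h : MvPolynomial σ R} {m n : M}
    (hF : F.IsWeightedHomogeneous w m) (hF0 : F ≠ 0)
    (hFh : (F * h).IsWeightedHomogeneous w (m + n)) : h.IsWeightedHomogeneous w n := by
  have hcomp : ∀ k ≠ n, weightedHomogeneousComponent w k h = 0 := fun k hk =>
    (mul_eq_zero.mp <| (hF.weightedHomogeneousComponent_mul_left k h).symm.trans <|
      hFh.weightedHomogeneousComponent_ne _ (by simpa using hk)).resolve_left hF0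
  rw [← finsum_weightedHomogeneousComponent w h, finsum_eq_single _ n hcomp]
  exact weightedHomogeneousComponent_isWeightedHomogeneous n h

end WeightedHomogeneous

end MvPolynomial

section Segre

variable (R ι κ : Type*) [CommSemiring R]

noncomputable def segreMap : MvPolynomial (ι × κ) R →ₐ[R] MvPolynomial (ι ⊕ κ) R :=
  aeval fun p => X (Sum.inl p.1) * X (Sum.inr p.2)

def bidegree : ι ⊕ κ → ℕ × ℕ := Sum.elim (fun _ => (1, 0)) (fun _ => (0, 1))

variable {R ι κ}

theorem weight_bidegree [Fintype ι] [Fintype κ] (d : ι ⊕ κ →₀ ℕ) :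
    Finsupp.weight (bidegree ι κ) d = (∑ i, d (Sum.inl i), ∑ j, d (Sum.inr j)) := by
  simp [Finsupp.weight_eq_sum, bidegree, Fintype.sum_sum_type, Prod.ext_iff, Prod.fst_sum,
    Prod.snd_sum]

theorem segreMap_X (p : ι × κ) :
    segreMap R ι κ (X p) = X (Sum.inl p.1) * X (Sum.inr p.2) :=
  aeval_X _ _

theorem MvPolynomial.IsHomogeneous.isWeightedHomogeneous_segreMap {G : MvPolynomial (ι × κ) R}
    {n : ℕ} (hG : G.IsHomogeneous n) :
    (segreMap R ι κ G).IsWeightedHomogeneous (bidegree ι κ) (n, n) := by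
  have h := hG.isWeightedHomogeneous_aeval (m := ((1, 1) : ℕ × ℕ)) fun p =>
    (isWeightedHomogeneous_X R (bidegree ι κ) (Sum.inl p.1)).mul
      (isWeightedHomogeneous_X R (bidegree ι κ) (Sum.inr p.2))
  rwa [show n • ((1, 1) : ℕ × ℕ) = (n, n) by simp] at h

theorem MvPolynomial.IsHomogeneous.isWeightedHomogeneous_rename_inr [Fintype ι] [Fintype κ]
    {Q : MvPolynomial κ R} {k : ℕ} (hQ : Q.IsHomogeneous k) :
    (rename Sum.inr Q : MvPolynomial (ι ⊕ κ) R).IsWeightedHomogeneous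
      (bidegree ι κ) (0, k) := by
  intro d hd
  obtain ⟨u, rfl, hu⟩ := coeff_rename_ne_zero _ _ _ hd
  have hdeg : ∑ j, u j = k := by
    rw [← Finsupp.degree_eq_sum, Finsupp.degree_eq_weight_one]
    exact hQ hu
  simp [weight_bidegree, Finsupp.mapDomain_of_notMem_range,
    Finsupp.mapDomain_apply Sum.inr_injective, hdeg]

theorem segreMap_prod_X_pow [Fintype ι] [Fintype κ] (A : ι → κ → ℕ) :
    segreMap R ι κ (∏ p : ι × κ, X p ^ A p.1 p.2) =
      (∏ i, X (Sum.inl i) ^ ∑ j, A i j) * ∏ j, X (Sum.inr j) ^ ∑ i, A i j := by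
  simp only [map_prod, map_pow, segreMap_X, mul_pow, Finset.prod_mul_distrib,
    Fintype.prod_prod_type, Finset.prod_pow_eq_pow_sum]
  rw [Finset.prod_comm]
  simp only [Finset.prod_pow_eq_pow_sum]

theorem exists_isHomogeneous_segreMap_eq [Fintype ι] [Fintype κ]
    {P : MvPolynomial (ι ⊕ κ) R} {n : ℕ}
    (hP : P.IsWeightedHomogeneous (bidegree ι κ) (n, n)) :
    ∃ G : MvPolynomial (ι × κ) R, G.IsHomogeneous n ∧ segreMap R ι κ G = P := by
  suffices hP : P ∈ (homogeneousSubmodule (ι × κ) R n).map (segreMap R ι κ).toLinearMap by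
    simpa using hP
  rw [← P.support_sum_monomial_coeff]
  refine Submodule.sum_mem _ fun d hd => ?_
  obtain ⟨hrow, hcol⟩ : ∑ i, d (Sum.inl i) = n ∧ ∑ j, d (Sum.inr j) = n := by
    simpa [weight_bidegree] using hP (mem_support_iff.mp hd)
  obtain ⟨A, hA₁, hA₂⟩ := exists_matrix_of_sum_rows_of_sum_cols n _ _ hrow hcol
  have hA : monomial d (coeff d P) =
      coeff d P • segreMap R ι κ (∏ p : ι × κ, X p ^ A p.1 p.2) := by
    rw [segreMap_prod_X_pow, smul_eq_C_mul, monomial_eq,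
      Finsupp.prod_fintype _ _ (fun _ => pow_zero _), Fintype.prod_sum_type]
    simp only [hA₁, hA₂]
  rw [hA]
  refine Submodule.smul_mem _ _ (Submodule.mem_map_of_mem ?_)
  rw [mem_homogeneousSubmodule, ← hrow]
  simp only [← hA₁]
  rw [← Fintype.sum_prod_type']
  exact IsHomogeneous.prod _ _ _ fun p _ => isHomogeneous_X_pow p _

theorem segreRestriction_eq : segreRestriction = segreMap ℂ (Fin 2) (Fin 3) := rfl

theorem bidegWt_eq : bidegWt = bidegree (Fin 2) (Fin 3) := rfl

end Segre

theorem image_of_cubics_through_quartic_scroll (Q : MvPolynomial (Fin 3) ℂ)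
    (hQ2 : Q.IsHomogeneous 2)
    -- B = {Q = 0} is a smooth conic
    (hQsm : ∀ x : Fin 3 → ℂ, x ≠ 0 → eval x Q = 0 → ∃ i, eval x (pderiv i Q) ≠ 0) :
    -- F : the defining equation of R = ℙ¹ × B in ℙ¹ × ℙ², of bidegree (0,2)
    segreRestriction ''
        {G : MvPolynomial VarP5 ℂ | G.IsHomogeneous 3 ∧
          -- G vanishes on R, i.e. G ∈ H⁰(I_R(3))
          ∀ (z : Fin 2 → ℂ) (x : Fin 3 → ℂ),
            eval (Sum.elim z x) (rename Sum.inr Q) = 0 →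
            eval (Sum.elim z x) (segreRestriction G) = 0} =
      (fun h => rename Sum.inr Q * h) ''
        {h : MvPolynomial VarP1P2 ℂ | h.IsWeightedHomogeneous bidegWt (3, 1)} := by
  rw [segreRestriction_eq, bidegWt_eq]
  have hF : Squarefree (rename Sum.inr Q : MvPolynomial VarP1P2 ℂ) :=
    IsSmoothAwayFromZero.squarefree_rename hQsm Sum.inr_injective (a := 0) (b := 1) (by decide)
  have hFhom : (rename Sum.inr Q : MvPolynomial VarP1P2 ℂ).IsWeightedHomogeneous
      (bidegree (Fin 2) (Fin 3)) (0, 2) := hQ2.isWeightedHomogeneous_rename_inr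
  ext P
  constructor
  · rintro ⟨G, ⟨hG, hGR⟩, rfl⟩
    obtain ⟨h, hh⟩ := hF.dvd_of_forall_eval_eq_zero fun x hx => by
      simpa using hGR (x ∘ Sum.inl) (x ∘ Sum.inr) (by simpa using hx)
    exact ⟨h, hFhom.of_mul_left hF.ne_zero (hh ▸ hG.isWeightedHomogeneous_segreMap), hh.symm⟩
  · rintro ⟨h, hh, rfl⟩
    obtain ⟨G, hG, hGP⟩ := exists_isHomogeneous_segreMap_eq (hFhom.mul hh)
    exact ⟨G, ⟨hG, fun z x hx => by rw [hGP, eval_mul, hx, zero_mul]⟩, hGP⟩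
end

section
/- Two points of (C*)^9 (with coordinates C_{ijk} for (i,j,k) ∈ {(0,1,1),(1,2,0),(1,0,2),(2,2,0),(2,1,1),(2,0,2),(3,2,0),(3,1,1),(3,0,2)}) lie in the same orbit of the (C*)^3-action (a,b,c)·C_{ijk} = a^i b^j c^k C_{ijk} if and only if they have the same values of the six invariants (I_1, J_2, J_3, I_4, I_5, I_6). -/
/-!
STATEMENT 12: Two points of (ℂ*)⁹ (with coordinates C_{ijk} for (i,j,k) in
{(0,1,1),(1,2,0),(1,0,2),(2,2,0),(2,1,1),(2,0,2),(3,2,0),(3,1,1),(3,0,2)})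
lie in the same orbit of the (ℂ*)³-action (a,b,c)·C_{ijk} = aⁱbʲcᵏ C_{ijk}
if and only if they have the same values of the six invariants
(I₁, J₂, J₃, I₄, I₅, I₆).
-/

/-- The nine nonzero coefficients `C_{ijk}`, for
`(i,j,k) ∈ {(0,1,1),(1,2,0),(1,0,2),(2,2,0),(2,1,1),(2,0,2),(3,2,0),(3,1,1),(3,0,2)}`. -/
structure Coeffs where
  c011 : ℂˣ
  c120 : ℂˣ
  c102 : ℂˣ
  c220 : ℂˣ
  c211 : ℂˣ
  c202 : ℂˣ
  c320 : ℂˣ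
  c311 : ℂˣ
  c302 : ℂˣ

/-- The action of the torus `(ℂ*)³`: `(a,b,c) · C_{ijk} = aⁱbʲcᵏ C_{ijk}`. -/
def torusAct (a b c : ℂˣ) (C : Coeffs) : Coeffs where
  c011 := b * c * C.c011
  c120 := a * b ^ 2 * C.c120
  c102 := a * c ^ 2 * C.c102
  c220 := a ^ 2 * b ^ 2 * C.c220
  c211 := a ^ 2 * b * c * C.c211
  c202 := a ^ 2 * c ^ 2 * C.c202
  c320 := a ^ 3 * b ^ 2 * C.c320
  c311 := a ^ 3 * b * c * C.c311
  c302 := a ^ 3 * c ^ 2 * C.c302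

def I1 (C : Coeffs) : ℂˣ := C.c120 * C.c102 / (C.c211 * C.c011)
def J2 (C : Coeffs) : ℂˣ := C.c011 * C.c311 / (C.c220 * C.c102)
def J3 (C : Coeffs) : ℂˣ := C.c302 * C.c011 / (C.c211 * C.c102)
def I4 (C : Coeffs) : ℂˣ := C.c220 * C.c202 / C.c211 ^ 2
def I5 (C : Coeffs) : ℂˣ := C.c320 * C.c302 / C.c311 ^ 2
def I6 (C : Coeffs) : ℂˣ := C.c211 ^ 3 / (C.c311 ^ 2 * C.c011)

/-!
The action is the composite of the character map `(ℂ*)³ → (ℂ*)⁹`, `(a,b,c) ↦ (aⁱbʲcᵏ)`, with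
coordinatewise multiplication, and the six invariants are characters of `(ℂ*)⁹` trivial on its
image. So `C'` is in the orbit of `C` iff the ratio `C' / C` lies in the image, and the invariants
agree iff they are trivial on `C' / C`. Triviality of the invariants lets one solve for six
coordinates of a point in terms of `C₁₀₂, C₂₁₁, C₃₁₁`, and these three are matched by
`a = C₃₁₁ / C₂₁₁` and a square root `c` of `C₁₀₂ C₂₁₁ / C₃₁₁`.
-/

instance : One Coeffs := ⟨⟨1, 1, 1, 1, 1, 1, 1, 1, 1⟩⟩

instance : Div Coeffs :=
  ⟨fun C' C => ⟨C'.c011 / C.c011, C'.c120 / C.c120, C'.c102 / C.c102, C'.c220 / C.c220,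
    C'.c211 / C.c211, C'.c202 / C.c202, C'.c320 / C.c320, C'.c311 / C.c311, C'.c302 / C.c302⟩⟩

theorem Coeffs.one_def : (1 : Coeffs) = ⟨1, 1, 1, 1, 1, 1, 1, 1, 1⟩ := rfl

theorem Coeffs.div_def (C' C : Coeffs) :
    C' / C = ⟨C'.c011 / C.c011, C'.c120 / C.c120, C'.c102 / C.c102, C'.c220 / C.c220,
      C'.c211 / C.c211, C'.c202 / C.c202, C'.c320 / C.c320, C'.c311 / C.c311, C'.c302 / C.c302⟩ :=
  rfl

def invariants (C : Coeffs) : ℂˣ × ℂˣ × ℂˣ × ℂˣ × ℂˣ × ℂˣ :=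
  (I1 C, J2 C, J3 C, I4 C, I5 C, I6 C)

theorem invariants_torusAct (a b c : ℂˣ) (C : Coeffs) :
    invariants (torusAct a b c C) = invariants C := by
  simp only [invariants, I1, J2, J3, I4, I5, I6, torusAct, Prod.mk.injEq]
  refine ⟨?_, ?_, ?_, ?_, ?_, ?_⟩ <;> ext <;> push_cast <;> field_simp

theorem invariants_div (C' C : Coeffs) : invariants (C' / C) = invariants C' / invariants C := by
  simp only [invariants, I1, J2, J3, I4, I5, I6, Coeffs.div_def, Prod.mk_div_mk, Prod.mk.injEq]
  refine ⟨?_, ?_, ?_, ?_, ?_, ?_⟩ <;> ext <;> push_cast <;> field_simp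

theorem torusAct_eq_iff {a b c : ℂˣ} {C C' : Coeffs} :
    torusAct a b c C = C' ↔ torusAct a b c 1 = C' / C := by
  obtain ⟨⟩ := C
  obtain ⟨⟩ := C'
  simp only [torusAct, Coeffs.div_def, Coeffs.one_def, Coeffs.mk.injEq, mul_one, eq_div_iff_mul_eq']

theorem Units.exists_pow_eq {K : Type*} [Field K] [IsAlgClosed K] (u : Kˣ) {n : ℕ} (hn : 0 < n) :
    ∃ v : Kˣ, v ^ n = u := by
  obtain ⟨z, hz⟩ := IsAlgClosed.exists_pow_nat_eq (u : K) hn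
  have hz0 : z ≠ 0 := fun h => u.ne_zero (by rw [← hz, h, zero_pow hn.ne'])
  exact ⟨Units.mk0 z hz0, Units.ext (by simpa using hz)⟩

theorem exists_torusAct_one_eq_of_invariants_eq_one {R : Coeffs} (h : invariants R = 1) :
    ∃ a b c : ℂˣ, torusAct a b c 1 = R := by
  obtain ⟨r011, r120, r102, r220, r211, r202, r320, r311, r302⟩ := R
  simp only [invariants, I1, J2, J3, I4, I5, I6, Prod.mk_eq_one, div_eq_one] at h
  obtain ⟨h1, h2, h3, h4, h5, h6⟩ := h
  obtain rfl : r120 = r211 * r011 / r102 := eq_div_of_mul_eq' h1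
  obtain rfl : r220 = r011 * r311 / r102 := eq_div_of_mul_eq' h2.symm
  obtain rfl : r302 = r211 * r102 / r011 := eq_div_of_mul_eq' h3
  obtain rfl : r202 = r211 ^ 2 / (r011 * r311 / r102) := eq_div_of_mul_eq'' h4
  obtain rfl : r320 = r311 ^ 2 / (r211 * r102 / r011) := eq_div_of_mul_eq' h5
  obtain rfl : r011 = r211 ^ 3 / r311 ^ 2 := eq_div_of_mul_eq'' h6.symm
  obtain ⟨c, hc⟩ := (r102 * r211 / r311).exists_pow_eq two_pos
  obtain rfl : r102 = c ^ 2 * r311 / r211 := by rw [hc]; simp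
  refine ⟨r311 / r211, r211 ^ 3 / (r311 ^ 2 * c), c, ?_⟩
  simp only [torusAct, Coeffs.one_def, Coeffs.mk.injEq, mul_one]
  refine ⟨?_, ?_, ?_, ?_, ?_, ?_, ?_, ?_, ?_⟩ <;> ext <;> push_cast <;> field_simp

theorem torus_orbit_iff_invariants (C C' : Coeffs) :
    (∃ a b c : ℂˣ, torusAct a b c C = C') ↔
      (I1 C = I1 C' ∧ J2 C = J2 C' ∧ J3 C = J3 C' ∧
       I4 C = I4 C' ∧ I5 C = I5 C' ∧ I6 C = I6 C') := by
  suffices (∃ a b c : ℂˣ, torusAct a b c C = C') ↔ invariants C = invariants C' by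
    simpa only [invariants, Prod.mk.injEq] using this
  constructor
  · rintro ⟨a, b, c, rfl⟩
    exact (invariants_torusAct a b c C).symm
  · intro h
    have hR : invariants (C' / C) = 1 := by rw [invariants_div, h, div_self']
    obtain ⟨a, b, c, hact⟩ := exists_torusAct_one_eq_of_invariants_eq_one hR
    exact ⟨a, b, c, torusAct_eq_iff.2 hact⟩
end

section
/- Under the involution ι swapping Y_0 and Y_1 (which acts on coefficients by C_{ijk} ↦ C_{ikj}), the invariant J_2 = C_{011}C_{311}/(C_{220}C_{102}) transforms as ι(J_2) = I_1^{-1} J_2^{-1} I_4^{-1} I_6^{-1}, and J_3 = C_{302}C_{011}/(C_{211}C_{102}) transforms as ι(J_3) = I_1^{-1} J_3^{-1} I_5 I_6^{-1}. -/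
/-- The involution `C_{ijk} ↦ C_{ikj}` (swapping `Y₀` and `Y₁`). -/
def swapY (C : Coeffs) : Coeffs where
  c011 := C.c011
  c120 := C.c102
  c102 := C.c120
  c220 := C.c202
  c211 := C.c211
  c202 := C.c220
  c320 := C.c302
  c311 := C.c311
  c302 := C.c320

theorem J2_mul_J2_swapY (C : Coeffs) : J2 C * J2 (swapY C) = (I1 C * I4 C * I6 C)⁻¹ := by
  ext
  simp only [J2, I1, I4, I6, swapY, Units.val_mul, Units.val_inv_eq_inv_val,
    Units.val_div_eq_div_val, Units.val_pow_eq_pow_val]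
  field_simp

theorem J3_mul_J3_swapY (C : Coeffs) : J3 C * J3 (swapY C) = I5 C / (I1 C * I6 C) := by
  ext
  simp only [J3, I1, I5, I6, swapY, Units.val_mul, Units.val_div_eq_div_val,
    Units.val_pow_eq_pow_val]
  field_simp

theorem swap_transforms_J2_J3 (C : Coeffs) :
    J2 (swapY C) = (I1 C)⁻¹ * (J2 C)⁻¹ * (I4 C)⁻¹ * (I6 C)⁻¹ ∧
    J3 (swapY C) = (I1 C)⁻¹ * (J3 C)⁻¹ * I5 C * (I6 C)⁻¹ := by
  constructor
  · rw [eq_inv_mul_of_mul_eq (J2_mul_J2_swapY C), mul_inv, mul_inv]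
    ac_rfl
  · rw [eq_inv_mul_of_mul_eq (J3_mul_J3_swapY C), div_eq_mul_inv, mul_inv]
    ac_rfl
end
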